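/- For δ > 0 and x ∈ R^d with x ∉ Z^d, the Bochner–Riesz kernel B_N^{d,δ}(x) = Σ_{k ∈ Z^d} (1 − |k|²/N²)_+^δ e^{2πi⟨k,x⟩} satisfies |B_N^{d,δ}(x)| ≤ C(x,d,δ) N^{d-1} for all N ≥ 1, where C(x,d,δ) does not depend on N. -/

import Mathlib

/-!
Pick a coordinate `p` with `x p ∉ ℤ`, so that `z = e^{2πi x_p}` is a unit different from `1`.
Extending the weight `(1 - |k|²/N²)_+^δ` by zero, the kernel becomes a sum over the box
`[-N, N]^d`, which splits into `(2N+1)^{d-1}` lattice lines parallel to the `p`-th axis. Along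
each line the weight depends only on `|k_p|`, is non-increasing in it and is at most `1`, so Abel
summation against the bounded partial sums `∑ zⁿ` of the geometric series bounds every line sum
by `4 / |z - 1|`, uniformly in `N`.
-/

open Real

/-- The Bochner–Riesz kernel
`B_N^{d,δ}(x) = ∑_{k ∈ ℤ^d} (1 − |k|²/N²)_+^δ e^{2πi⟨k,x⟩}` (the sum is supported on
lattice points with `|k| ≤ N`). -/
noncomputable def bochnerRieszKernel (d : ℕ) (δ : ℝ) (N : ℕ) (x : Fin d → ℝ) : ℂ :=
  ∑ k ∈ (Fintype.piFinset fun _ : Fin d => Finset.Icc (-(N : ℤ)) (N : ℤ)).filter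
      (fun k => ∑ i, (k i) ^ 2 ≤ (N : ℤ) ^ 2),
    (((1 - (∑ i, ((k i : ℝ)) ^ 2) / (N : ℝ) ^ 2) ^ δ : ℝ) : ℂ) *
      Complex.exp (2 * (π : ℂ) * Complex.I * (∑ i, (k i : ℝ) * x i))

open Finset Fintype

theorem norm_sum_range_smul_le_of_antitone {E : Type*} [SeminormedAddCommGroup E]
    [NormedSpace ℝ E] {a : ℕ → ℝ} (ha : Antitone a) (ha0 : ∀ n, 0 ≤ a n) {g : ℕ → E} {c : ℝ}
    (hg : ∀ j, ‖∑ i ∈ range j, g i‖ ≤ c) (m : ℕ) :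
    ‖∑ i ∈ range m, a i • g i‖ ≤ a 0 * c := by
  rcases m with _ | m
  · simpa using mul_nonneg (ha0 0) ((norm_nonneg _).trans (hg 0))
  have hstep : ∀ i ∈ range m,
      ‖(a (i + 1) - a i) • ∑ j ∈ range (i + 1), g j‖ ≤ (a i - a (i + 1)) * c := fun i _ => by
    rw [norm_smul, Real.norm_of_nonpos (sub_nonpos.2 (ha i.le_succ)), neg_sub]
    exact mul_le_mul_of_nonneg_left (hg _) (sub_nonneg.2 (ha i.le_succ))
  rw [sum_range_by_parts, Nat.add_sub_cancel]
  calc _ ≤ ‖a m • ∑ i ∈ range (m + 1), g i‖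
        + ‖∑ i ∈ range m, (a (i + 1) - a i) • ∑ j ∈ range (i + 1), g j‖ := norm_sub_le _ _
    _ ≤ a m * c + ∑ i ∈ range m, (a i - a (i + 1)) * c := by
        gcongr
        · rw [norm_smul, Real.norm_of_nonneg (ha0 m)]
          exact mul_le_mul_of_nonneg_left (hg _) (ha0 m)
        · exact (norm_sum_le _ _).trans (sum_le_sum hstep)
    _ = a 0 * c := by rw [← sum_mul, sum_range_sub' a m]; ring

theorem norm_geom_sum_le {z : ℂ} (hz1 : ‖z‖ = 1) (hz : z ≠ 1) (j : ℕ) :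
    ‖∑ i ∈ range j, z ^ i‖ ≤ 2 / ‖z - 1‖ := by
  rw [geom_sum_eq hz, norm_div]
  gcongr
  calc ‖z ^ j - 1‖ ≤ ‖z ^ j‖ + ‖(1 : ℂ)‖ := norm_sub_le _ _
    _ = 2 := by rw [norm_pow, hz1]; norm_num

theorem norm_inv_sub_one_of_norm_eq_one {z : ℂ} (hz1 : ‖z‖ = 1) : ‖z⁻¹ - 1‖ = ‖z - 1‖ := by
  have hz0 : z ≠ 0 := norm_ne_zero_iff.1 (by rw [hz1]; exact one_ne_zero)
  rw [show z⁻¹ - 1 = z⁻¹ * -(z - 1) by field_simp; ring, norm_mul, norm_neg, norm_inv, hz1,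
    inv_one, one_mul]

theorem sum_Icc_neg_eq_add_sum_range {E : Type*} [AddCommMonoid E] (F : ℤ → E) (M : ℕ) :
    ∑ n ∈ Icc (-(M : ℤ)) M, F n = F 0 + ∑ j ∈ range M, (F (j + 1) + F (-(j + 1))) := by
  induction M with
  | zero => simp
  | succ M ih =>
    have hIcc : Icc (-((M + 1 : ℕ) : ℤ)) (M + 1 : ℕ)
        = insert ((M : ℤ) + 1) (insert (-((M : ℤ) + 1)) (Icc (-(M : ℤ)) M)) := by
      ext n; simp only [mem_Icc, mem_insert]; omega
    rw [hIcc, sum_insert (by simp; omega), sum_insert (by simp), ih, sum_range_succ]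
    abel

theorem norm_sum_Icc_mul_zpow_le {z : ℂ} (hz1 : ‖z‖ = 1) (hz : z ≠ 1) {a : ℕ → ℝ}
    (ha : Antitone a) (ha0 : ∀ n, 0 ≤ a n) (M : ℕ) :
    ‖∑ n ∈ Icc (-(M : ℤ)) M, (a n.natAbs : ℂ) * z ^ n‖ ≤ 4 * a 0 / ‖z - 1‖ := by
  have hsplit : ∑ n ∈ Icc (-(M : ℤ)) M, (a n.natAbs : ℂ) * z ^ n
      = ∑ j ∈ range (M + 1), a j • z ^ j
        + z⁻¹ • ∑ j ∈ range M, a (j + 1) • z⁻¹ ^ j := by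
    rw [sum_Icc_neg_eq_add_sum_range, sum_add_distrib, sum_range_succ', smul_sum]
    simp only [Complex.real_smul, smul_eq_mul, ← Nat.cast_add_one, Int.natAbs_neg,
      Int.natAbs_natCast, Int.natAbs_zero, zpow_zero, pow_zero, zpow_neg, zpow_natCast, ← inv_pow,
      pow_succ' z⁻¹, mul_left_comm _ z⁻¹]
    rw [add_left_comm, add_assoc]
  have hw1 : ‖z⁻¹‖ = 1 := by rw [norm_inv, hz1, inv_one]
  have hw : z⁻¹ ≠ 1 := inv_ne_one.2 hz
  have hpos := norm_sum_range_smul_le_of_antitone ha ha0 (norm_geom_sum_le hz1 hz) (M + 1)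
  have hneg := norm_sum_range_smul_le_of_antitone (fun i j hij => ha (by omega))
    (fun n => ha0 (n + 1)) (norm_geom_sum_le hw1 hw) M
  rw [norm_inv_sub_one_of_norm_eq_one hz1] at hneg
  calc _ ≤ a 0 * (2 / ‖z - 1‖) + a 1 * (2 / ‖z - 1‖) := by
        rw [hsplit]
        refine (norm_add_le _ _).trans (add_le_add hpos ?_)
        rwa [norm_smul, hw1, one_mul]
    _ ≤ a 0 * (2 / ‖z - 1‖) + a 0 * (2 / ‖z - 1‖) := by gcongr; exact ha zero_le_one
    _ = 4 * a 0 / ‖z - 1‖ := by ring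

theorem Complex.exp_two_pi_I_mul_ne_one {t : ℝ} (ht : ∀ n : ℤ, t ≠ n) :
    Complex.exp (2 * π * Complex.I * t) ≠ 1 := by
  rw [Ne, Complex.exp_eq_one_iff]
  rintro ⟨n, hn⟩
  refine ht n (Complex.ofReal_injective ?_)
  have h2πI : 2 * (π : ℂ) * Complex.I ≠ 0 := by simp [Real.pi_ne_zero]
  simpa using mul_left_cancel₀ h2πI (hn.trans (mul_comm _ _))

theorem Complex.norm_exp_two_pi_I_mul (t : ℝ) : ‖Complex.exp (2 * π * Complex.I * t)‖ = 1 := by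
  rw [Complex.norm_exp]; simp

noncomputable def radialTerm {d : ℕ} (φ : ℝ → ℝ) (x : Fin d → ℝ) (k : Fin d → ℤ) : ℂ :=
  (φ (∑ i, (k i : ℝ) ^ 2) : ℂ) *
    Complex.exp (2 * (π : ℂ) * Complex.I * (∑ i, (k i : ℝ) * x i))

theorem norm_sum_radialTerm_insertNth_le {n : ℕ} {φ : ℝ → ℝ} (hφ : Antitone φ)
    (hφ0 : ∀ t, 0 ≤ φ t) (x : Fin (n + 1) → ℝ) (p : Fin (n + 1))
    (hz : Complex.exp (2 * π * Complex.I * x p) ≠ 1) (M : ℕ) (y : Fin n → ℤ) :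
    ‖∑ m ∈ Icc (-(M : ℤ)) M, radialTerm φ x (p.insertNth m y)‖
      ≤ 4 * φ 0 / ‖Complex.exp (2 * π * Complex.I * x p) - 1‖ := by
  set z := Complex.exp (2 * π * Complex.I * x p)
  set R := ∑ j, ((y j : ℤ) : ℝ) ^ 2
  set c := ∑ j, ((y j : ℤ) : ℝ) * x (p.succAbove j)
  have hterm : ∀ m : ℤ, radialTerm φ x (p.insertNth m y)
      = Complex.exp (2 * π * Complex.I * c) * ((φ ((m.natAbs : ℝ) ^ 2 + R) : ℂ) * z ^ m) := by
    intro m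
    rw [← Complex.exp_int_mul, radialTerm, Fin.sum_univ_succAbove _ p, Fin.sum_univ_succAbove _ p]
    simp only [Fin.insertNth_apply_same, Fin.insertNth_apply_succAbove, Nat.cast_natAbs,
      Int.cast_abs, sq_abs]
    rw [mul_left_comm, ← Complex.exp_add]
    push_cast [R, c]
    ring_nf
  have ha : Antitone fun j : ℕ => φ ((j : ℝ) ^ 2 + R) := fun i j hij => hφ (by gcongr)
  rw [sum_congr rfl fun m _ => hterm m, ← mul_sum, norm_mul, Complex.norm_exp_two_pi_I_mul,
    one_mul]
  calc _ ≤ 4 * φ (((0 : ℕ) : ℝ) ^ 2 + R) / ‖z - 1‖ :=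
        norm_sum_Icc_mul_zpow_le (Complex.norm_exp_two_pi_I_mul _) hz ha (fun _ => hφ0 _) M
    _ ≤ 4 * φ 0 / ‖z - 1‖ := by
        gcongr
        exact hφ (by positivity)

theorem norm_sum_piFinset_le_of_line {E α : Type*} [SeminormedAddCommGroup E] {n : ℕ}
    (p : Fin (n + 1)) (s : Finset α) (F : (Fin (n + 1) → α) → E) {c : ℝ}
    (hF : ∀ y : Fin n → α, ‖∑ a ∈ s, F (p.insertNth a y)‖ ≤ c) :
    ‖∑ k ∈ piFinset fun _ => s, F k‖ ≤ (#s : ℝ) ^ n * c := by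
  have hbox := filter_piFinset_eq_map_insertNthEquiv (p := p) (fun _ => s) (fun _ => True)
  simp only [filter_true] at hbox
  rw [hbox, sum_map, sum_product_right]
  calc _ ≤ ∑ y ∈ piFinset (p.removeNth fun _ => s), ‖∑ a ∈ s, F (p.insertNth a y)‖ :=
        norm_sum_le _ _
    _ ≤ ∑ _y ∈ piFinset (p.removeNth fun _ => s), c := sum_le_sum fun y _ => hF y
    _ = (#s : ℝ) ^ n * c := by simp [card_piFinset, Fin.removeNth]

/-- `(1 - t / N²)_+^δ`; the truncation keeps `Real.rpow` away from negative bases. -/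
noncomputable def bochnerRieszWeight (δ : ℝ) (N : ℕ) (t : ℝ) : ℝ :=
  (max 0 (1 - t / (N : ℝ) ^ 2)) ^ δ

theorem bochnerRieszWeight_nonneg (δ : ℝ) (N : ℕ) (t : ℝ) : 0 ≤ bochnerRieszWeight δ N t :=
  Real.rpow_nonneg (le_max_left _ _) δ

theorem bochnerRieszWeight_zero (δ : ℝ) (N : ℕ) : bochnerRieszWeight δ N 0 = 1 := by
  simp [bochnerRieszWeight]

theorem bochnerRieszWeight_antitone {δ : ℝ} (hδ : 0 ≤ δ) (N : ℕ) :
    Antitone (bochnerRieszWeight δ N) := fun s t hst =>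
  Real.rpow_le_rpow (le_max_left _ _) (max_le_max le_rfl (by gcongr)) hδ

theorem bochnerRieszKernel_eq_sum_radialTerm {d : ℕ} {δ : ℝ} (hδ : δ ≠ 0) {N : ℕ} (hN : 0 < N)
    (x : Fin d → ℝ) :
    bochnerRieszKernel d δ N x = ∑ k ∈ piFinset fun _ : Fin d => Icc (-(N : ℤ)) N,
      radialTerm (bochnerRieszWeight δ N) x k := by
  have hN2 : (0 : ℝ) < (N : ℝ) ^ 2 := by positivity
  rw [bochnerRieszKernel, sum_filter]
  refine sum_congr rfl fun k _ => ?_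
  rw [radialTerm, bochnerRieszWeight]
  split_ifs with hk
  · have hk' : (∑ i, ((k i : ℤ) : ℝ) ^ 2) ≤ (N : ℝ) ^ 2 := by exact_mod_cast hk
    rw [max_eq_right (sub_nonneg.2 ((div_le_one hN2).2 hk'))]
  · have hk' : (N : ℝ) ^ 2 < ∑ i, ((k i : ℤ) : ℝ) ^ 2 := by exact_mod_cast not_le.1 hk
    rw [max_eq_left (sub_nonpos.2 ((one_le_div hN2).2 hk'.le)), Real.zero_rpow hδ]
    simp

/-- **Growth bound for the Bochner–Riesz kernel on `𝕋^d`.** For `δ > 0` and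
`x ∈ ℝ^d \ ℤ^d` there is a constant `C(x,d,δ)`, independent of `N`, such that
`|B_N^{d,δ}(x)| ≤ C(x,d,δ) N^{d-1}` for all `N ≥ 1`. -/
theorem bochnerRieszKernel_bound (d : ℕ) (δ : ℝ) (hδ : 0 < δ) (x : Fin d → ℝ)
    (hx : ¬ ∀ i, ∃ n : ℤ, x i = n) :
    ∃ C : ℝ, ∀ N : ℕ, 1 ≤ N →
      ‖bochnerRieszKernel d δ N x‖ ≤ C * (N : ℝ) ^ (d - 1) := by
  push Not at hx
  obtain ⟨p, hp⟩ := hx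
  obtain ⟨n, rfl⟩ : ∃ n, d = n + 1 := ⟨d - 1, by have := p.pos; omega⟩
  set z := Complex.exp (2 * π * Complex.I * x p)
  refine ⟨4 / ‖z - 1‖ * 3 ^ n, fun N hN => ?_⟩
  have hcard : (#(Icc (-(N : ℤ)) N) : ℝ) ≤ 3 * N := by
    have : #(Icc (-(N : ℤ)) N) = 2 * N + 1 := by rw [Int.card_Icc]; omega
    rw [this]; push_cast
    linarith [(Nat.one_le_cast (α := ℝ)).2 hN]
  rw [bochnerRieszKernel_eq_sum_radialTerm hδ.ne' hN]
  calc _ ≤ (#(Icc (-(N : ℤ)) N) : ℝ) ^ n * (4 * bochnerRieszWeight δ N 0 / ‖z - 1‖) :=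
        norm_sum_piFinset_le_of_line p _ _ fun y =>
          norm_sum_radialTerm_insertNth_le (bochnerRieszWeight_antitone hδ.le N)
            (bochnerRieszWeight_nonneg δ N) x p (Complex.exp_two_pi_I_mul_ne_one hp) N y
    _ ≤ (3 * N) ^ n * (4 / ‖z - 1‖) := by
        rw [bochnerRieszWeight_zero, mul_one]
        gcongr
    _ = 4 / ‖z - 1‖ * 3 ^ n * (N : ℝ) ^ (n + 1 - 1) := by
        rw [Nat.add_sub_cancel, mul_pow]; ring
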